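/- arXiv:2508.17917 — 4 statements merged into one kernel-verified Lean document; each statement's English description precedes it below -/
import Mathlib

section
/- For every natural number p and every real polynomial v of degree at most p, the squared value of v at the right endpoint of the interval [-1,1] is bounded by the scaled L2 norm: (v(1))^2 ≤ ((p+1)^2/2) · ∫_{-1}^{1} v(x)^2 dx. -/
open MeasureTheory

namespace TraceAux

open Polynomial

noncomputable def W (n : ℕ) : ℝ[X] := (X ^ 2 - 1) ^ n
noncomputable def L (n : ℕ) : ℝ[X] :=
  (((2 : ℝ) ^ n * n.factorial)⁻¹) • derivative^[n] (W n)

lemma intInt (f : ℝ[X]) : IntervalIntegrable (fun x => f.eval x) volume (-1) 1 :=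
  f.continuous.intervalIntegrable _ _

/-- Integration by parts for polynomials on [-1,1]. -/
lemma ibp (f g : ℝ[X]) :
    ∫ x in (-1:ℝ)..1, (derivative f).eval x * g.eval x
      = f.eval 1 * g.eval 1 - f.eval (-1) * g.eval (-1)
        - ∫ x in (-1:ℝ)..1, f.eval x * (derivative g).eval x := by
  have h := intervalIntegral.integral_deriv_mul_eq_sub
    (u := fun x => f.eval x) (v := fun x => g.eval x)
    (u' := fun x => (derivative f).eval x) (v' := fun x => (derivative g).eval x)
    (fun x _ => f.hasDerivAt x) (fun x _ => g.hasDerivAt x)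
    (intInt _) (intInt _)
  rw [intervalIntegral.integral_add
    ((intInt (derivative f)).mul_continuousOn g.continuous.continuousOn)
    ((intInt (derivative g)).continuousOn_mul f.continuous.continuousOn)] at h
  linarith [h]

lemma dvd_iter (n k : ℕ) (hk : k ≤ n) :
    ∃ q : ℝ[X], derivative^[k] (W n) = (X ^ 2 - 1) ^ (n - k) * q := by
  induction k with
  | zero => exact ⟨1, by simp [W]⟩
  | succ k ih =>
    obtain ⟨q, hq⟩ := ih (le_of_lt (Nat.lt_of_succ_le hk))
    refine ⟨((n - k : ℕ) : ℝ[X]) * (2 * X) * q + (X ^ 2 - 1) * derivative q, ?_⟩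
    rw [Function.iterate_succ_apply', hq]
    have h1 : (n : ℕ) - (k + 1) + 1 = n - k := by omega
    rw [derivative_mul, derivative_pow]
    rw [← h1]
    ring_nf
    simp [derivative_sub, derivative_pow]
    have : (C (2:ℝ)) = (2:ℝ[X]) := map_ofNat C 2
    rw [this]; ring

lemma eval_iter_W (n k : ℕ) (hk : k < n) (x : ℝ) (hx : x ^ 2 = 1) :
    (derivative^[k] (W n)).eval x = 0 := by
  obtain ⟨q, hq⟩ := dvd_iter n k hk.le
  rw [hq]
  simp [hx, Nat.sub_ne_zero_of_lt hk]

lemma iter_ibp (n : ℕ) : ∀ k, k ≤ n → ∀ g : ℝ[X],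
    ∫ x in (-1:ℝ)..1, (derivative^[k] (W n)).eval x * g.eval x
      = (-1:ℝ)^k * ∫ x in (-1:ℝ)..1, (W n).eval x * (derivative^[k] g).eval x := by
  intro k
  induction k with
  | zero => intro _ g; simp
  | succ k ih =>
    intro hk g
    rw [Function.iterate_succ_apply', ibp (derivative^[k] (W n)) g,
      eval_iter_W n k (by omega) 1 (by norm_num),
      eval_iter_W n k (by omega) (-1) (by norm_num),
      ih (by omega) (derivative g), ← Function.iterate_succ_apply]
    ring

noncomputable def In (n : ℕ) : ℝ := ∫ x in (-1:ℝ)..1, (W n).eval x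

lemma In_succ (n : ℕ) : (2*(n:ℝ)+3) * In (n+1) = -(2*(n:ℝ)+2) * In n := by
  have key : derivative (W (n+1)) * X = C (2*((n:ℝ)+1)) * (W (n+1) + W n) := by
    simp only [W, derivative_pow]
    push_cast
    simp [derivative_X_pow]
    rw [show (C (2:ℝ)) = (2:ℝ[X]) from map_ofNat C 2]; ring
  have hev : ∀ x : ℝ, (derivative (W (n+1))).eval x * (X:ℝ[X]).eval x
      = (2*((n:ℝ)+1)) * ((W (n+1)).eval x + (W n).eval x) := by
    intro x
    have := congrArg (eval x) key
    simpa using this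
  have h := ibp (W (n+1)) X
  have hb1 : (W (n+1)).eval 1 = 0 := by simp [W]
  have hb2 : (W (n+1)).eval (-1) = 0 := by simp [W]
  rw [hb1, hb2] at h
  have hL : ∫ x in (-1:ℝ)..1, (derivative (W (n+1))).eval x * (X:ℝ[X]).eval x
      = (2*((n:ℝ)+1)) * (In (n+1) + In n) := by
    rw [intervalIntegral.integral_congr (g := fun x => (2*((n:ℝ)+1)) * ((W (n+1)).eval x + (W n).eval x)) (fun x _ => hev x)]
    rw [intervalIntegral.integral_const_mul, intervalIntegral.integral_add (intInt _) (intInt _)]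
    rfl
  rw [hL] at h
  simp only [derivative_X] at h
  have : ∫ x in (-1:ℝ)..1, (W (n+1)).eval x * (1:ℝ[X]).eval x = In (n+1) := by
    simp [In]
  rw [this] at h
  push_cast at h ⊢
  linarith

lemma In_closed (n : ℕ) :
    (-1:ℝ)^n * In n = 2^(2*n+1) * (n.factorial:ℝ)^2 / ((2*n+1).factorial) := by
  induction n with
  | zero => simp [In, W]; norm_num
  | succ n ih =>
    have h3 : (2*(n:ℝ)+3) ≠ 0 := by positivity
    have hs : ((-1:ℝ)^n) * ((-1:ℝ)^n) = 1 := by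
      rw [← pow_add]; exact Even.neg_one_pow ⟨n, rfl⟩
    have hIn : In n = (-1:ℝ)^n * (2^(2*n+1) * (n.factorial:ℝ)^2 / ((2*n+1).factorial)) := by
      rw [← ih, ← mul_assoc, hs, one_mul]
    have h := In_succ n
    have hfac : ((2*(n+1)+1).factorial : ℝ) = (2*(n:ℝ)+3)*(2*(n:ℝ)+2)*((2*n+1).factorial) := by
      have h2 : 2*(n+1)+1 = (2*n+1) + 1 + 1 := by ring
      rw [h2, Nat.factorial_succ, Nat.factorial_succ]
      push_cast
      ring
    have hfac2 : ((n+1).factorial : ℝ) = ((n:ℝ)+1) * n.factorial := by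
      rw [Nat.factorial_succ]; push_cast; ring
    have hfpos : (0:ℝ) < ((2*n+1).factorial : ℝ) := by positivity
    have hIn1 : In (n+1) = -(2*(n:ℝ)+2)/(2*(n:ℝ)+3) * In n := by
      field_simp
      linarith
    have hp : (2:ℝ)^(2*(n+1)+1) = 2^(2*n+1)*4 := by
      rw [show 2*(n+1)+1 = (2*n+1)+2 by ring, pow_add]; norm_num
    rw [hIn1, hIn, hfac, hfac2, hp, pow_succ]
    rcases Nat.even_or_odd n with he | ho
    · rw [he.neg_one_pow]
      field_simp
      ring
    · rw [ho.neg_one_pow]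
      field_simp
      ring

lemma cpos (n : ℕ) : (0:ℝ) < (2:ℝ)^n * n.factorial := by positivity

lemma iter_deriv_eval_one : ∀ n : ℕ, ∀ g : ℝ[X],
    (derivative^[n] ((X - 1)^n * g)).eval 1 = n.factorial * g.eval 1 := by
  intro n
  induction n with
  | zero => intro g; simp
  | succ n ih =>
    intro g
    have key : derivative ((X - 1)^(n+1) * g)
        = (X - 1)^n * (C ((n:ℝ)+1) * g + (X - 1) * derivative g) := by
      rw [derivative_mul, derivative_pow]
      push_cast
      simp
      ring
    rw [Function.iterate_succ_apply, key, ih]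
    simp [Nat.factorial_succ]
    push_cast
    ring

lemma W_eq (n : ℕ) : W n = (X - 1)^n * ((X + 1)^n) := by
  rw [W, ← mul_pow]; ring_nf

lemma L_eval_one (n : ℕ) : (L n).eval 1 = 1 := by
  have h : (derivative^[n] (W n)).eval 1 = n.factorial * 2^n := by
    rw [W_eq, iter_deriv_eval_one]
    norm_num
  rw [L, eval_smul, h, smul_eq_mul]
  have := cpos n
  field_simp

lemma W_monic (n : ℕ) : (W n).Monic := by
  have h : (X ^ 2 - 1 : ℝ[X]).Monic := by
    have := monic_X_pow_sub_C (1:ℝ) (two_ne_zero)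
    simpa using this
  exact h.pow n

lemma W_natDeg (n : ℕ) : (W n).natDegree = 2*n := by
  rw [W, natDegree_pow]
  have h : (X ^ 2 - 1 : ℝ[X]).natDegree = 2 := by
    compute_degree!
  rw [h]; ring

lemma L_natDegree_le (n : ℕ) : (L n).natDegree ≤ n := by
  refine le_trans (natDegree_smul_le _ _) ?_
  refine le_trans (natDegree_iterate_derivative _ _) ?_
  rw [W_natDeg]; omega

lemma L_orth (n : ℕ) (q : ℝ[X]) (hq : q.natDegree < n) :
    ∫ x in (-1:ℝ)..1, (L n).eval x * q.eval x = 0 := by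
  have : ∀ x : ℝ, (L n).eval x * q.eval x
      = ((2:ℝ)^n * n.factorial)⁻¹ * ((derivative^[n] (W n)).eval x * q.eval x) := by
    intro x; rw [L, eval_smul, smul_eq_mul]; ring
  rw [intervalIntegral.integral_congr (fun x _ => this x),
    intervalIntegral.integral_const_mul, iter_ibp n n le_rfl q,
    iterate_derivative_eq_zero hq]
  simp

lemma dW2n (n : ℕ) : derivative^[2*n] (W n) = C (((2*n).factorial : ℝ)) := by
  have hdeg : (derivative^[2*n] (W n)).natDegree = 0 :=
    le_antisymm (le_trans (natDegree_iterate_derivative _ _) (by rw [W_natDeg]; omega)) (Nat.zero_le _)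
  rw [eq_C_of_natDegree_le_zero hdeg.le, coeff_iterate_derivative]
  have hc : (W n).coeff (0 + 2*n) = 1 := by
    rw [zero_add, ← W_natDeg n]
    exact (W_monic n).coeff_natDegree
  rw [hc, zero_add, Nat.descFactorial_self]
  simp

lemma L_norm (n : ℕ) : ∫ x in (-1:ℝ)..1, (L n).eval x * (L n).eval x = 2/(2*(n:ℝ)+1) := by
  set c : ℝ := (2:ℝ)^n * n.factorial with hc
  have hc0 : c ≠ 0 := (cpos n).ne'
  have step1 : ∀ x : ℝ, (L n).eval x * (L n).eval x
      = c⁻¹ * ((derivative^[n] (W n)).eval x * (L n).eval x) := by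
    intro x; rw [L, eval_smul, smul_eq_mul]; ring
  rw [intervalIntegral.integral_congr (fun x _ => step1 x),
    intervalIntegral.integral_const_mul, iter_ibp n n le_rfl (L n)]
  have step2 : derivative^[n] (L n) = C (c⁻¹ * (2*n).factorial) := by
    rw [L, Polynomial.iterate_derivative_smul, ← Function.iterate_add_apply,
      show n + n = 2*n by ring, dW2n]
    rw [smul_C, smul_eq_mul]
  rw [step2]
  have step3 : ∀ x : ℝ, (W n).eval x * (C (c⁻¹ * (2*n).factorial)).eval x
      = (c⁻¹ * (2*n).factorial) * (W n).eval x := by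
    intro x; simp; ring
  rw [intervalIntegral.integral_congr (fun x _ => step3 x),
    intervalIntegral.integral_const_mul]
  have hIn : In n = ∫ x in (-1:ℝ)..1, (W n).eval x := rfl
  rw [← hIn]
  have hval : (-1:ℝ)^n * In n = 2^(2*n+1) * (n.factorial:ℝ)^2 / ((2*n+1).factorial) :=
    In_closed n
  have hs : ((-1:ℝ)^n) * ((-1:ℝ)^n) = 1 := by
    rw [← pow_add]; exact Even.neg_one_pow ⟨n, rfl⟩
  have hIneq : In n = (-1:ℝ)^n * (2^(2*n+1) * (n.factorial:ℝ)^2 / ((2*n+1).factorial)) := by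
    rw [← hval, ← mul_assoc, hs, one_mul]
  rw [hIneq]
  have hfac : ((2*n+1).factorial : ℝ) = (2*(n:ℝ)+1) * ((2*n).factorial) := by
    rw [Nat.factorial_succ]; push_cast; ring
  have h2 : (2:ℝ)^(2*n+1) = ((2:ℝ)^n)^2 * 2 := by
    rw [← pow_mul, pow_succ, mul_comm n 2]
  rw [hfac, h2, hc]
  have hf1 : (0:ℝ) < ((2*n).factorial : ℝ) := by positivity
  have hf2 : (0:ℝ) < (n.factorial : ℝ) := by positivity
  have hf3 : (0:ℝ) < 2*(n:ℝ)+1 := by positivity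
  have hp : (0:ℝ) < (2:ℝ)^n := by positivity
  rcases Nat.even_or_odd n with he | ho
  · rw [he.neg_one_pow]
    field_simp
  · rw [ho.neg_one_pow]
    field_simp

lemma L_coeff_ne (n : ℕ) : (L n).coeff n ≠ 0 := by
  rw [L, coeff_smul, coeff_iterate_derivative]
  have h1 : (W n).coeff (n + n) = 1 := by
    rw [show n+n=2*n by ring, ← W_natDeg n]
    exact (W_monic n).coeff_natDegree
  rw [h1, nsmul_eq_mul, mul_one]
  have h2 : ((n+n).descFactorial n : ℝ) ≠ 0 := by
    have : (n+n).descFactorial n ≠ 0 := by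
      simp only [ne_eq, Nat.descFactorial_eq_zero_iff_lt]
      omega
    exact_mod_cast this
  have h3 : ((2:ℝ)^n * (n.factorial:ℝ))⁻¹ ≠ 0 := by positivity
  exact mul_ne_zero h3 h2

lemma L_zero : L 0 = 1 := by simp [L, W]

lemma mem_span_aux (p : ℕ) : ∀ n, n ≤ p → ∀ v : ℝ[X], v.natDegree ≤ n →
    v ∈ Submodule.span ℝ (Set.range (fun i : Fin (p+1) => L i)) := by
  intro n
  induction n with
  | zero =>
    intro _ v hv
    have : v = v.coeff 0 • L 0 := by
      rw [L_zero, smul_eq_C_mul, mul_one]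
      exact eq_C_of_natDegree_le_zero hv
    rw [this]
    exact Submodule.smul_mem _ _ (Submodule.subset_span ⟨⟨0, by omega⟩, rfl⟩)
  | succ n ih =>
    intro hnp v hv
    by_cases h0 : v.natDegree ≤ n
    · exact ih (by omega) v h0
    · have hd : v.natDegree = n+1 := by omega
      set k := n+1 with hk
      set u := v - (v.coeff k / (L k).coeff k) • L k with hu
      have hcu : u.coeff k = 0 := by
        rw [hu, coeff_sub, coeff_smul, smul_eq_mul, div_mul_cancel₀ _ (L_coeff_ne k)]
        ring
      have hdu : u.natDegree ≤ n := by
        rcases eq_or_ne u 0 with h | h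
        · simp [h]
        · have h1 : u.natDegree ≤ k :=
            le_trans (natDegree_sub_le _ _)
              (max_le hd.le (le_trans (natDegree_smul_le _ _) (L_natDegree_le k)))
          have h2 : u.natDegree ≠ k := by
            intro hkk
            rw [← hkk] at hcu
            exact h (leadingCoeff_eq_zero.mp hcu)
          omega
      have hmem := ih (by omega) u hdu
      have hvu : v = u + (v.coeff k / (L k).coeff k) • L k := by rw [hu]; ring
      rw [hvu]
      exact Submodule.add_mem _ hmem
        (Submodule.smul_mem _ _ (Submodule.subset_span ⟨⟨k, by omega⟩, rfl⟩))

lemma sum_odds : ∀ n : ℕ, ∑ i ∈ Finset.range n, (2*(i:ℝ)+1) = (n:ℝ)^2 := by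
  intro n
  induction n with
  | zero => simp
  | succ n ih => rw [Finset.sum_range_succ, ih]; push_cast; ring

end TraceAux

open TraceAux Polynomial in
/-- One-dimensional trace inverse estimate: for every polynomial `v` of degree at most `p`,
`(v 1)^2 ≤ ((p+1)^2/2) ∫_{-1}^{1} v(x)^2 dx`. -/
theorem trace_inverse_estimate_1d (p : ℕ) (v : Polynomial ℝ) (hv : v.degree ≤ (p : ℕ)) :
    (v.eval 1) ^ 2 ≤ (((p : ℝ) + 1) ^ 2 / 2) * ∫ x in (-1 : ℝ)..1, (v.eval x) ^ 2 := by
  have hnd : v.natDegree ≤ p := natDegree_le_iff_degree_le.mpr hv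
  obtain ⟨c, hc⟩ := (Submodule.mem_span_range_iff_exists_fun ℝ).mp (mem_span_aux p p le_rfl v hnd)
  have ev1 : v.eval 1 = ∑ i : Fin (p+1), c i := by
    rw [← hc, eval_finset_sum]
    refine Finset.sum_congr rfl fun i _ => ?_
    rw [eval_smul, L_eval_one, smul_eq_mul, mul_one]
  have hvx : ∀ x : ℝ, v.eval x = ∑ j : Fin (p+1), c j * (L (j:ℕ)).eval x := by
    intro x
    rw [← hc, eval_finset_sum]
    exact Finset.sum_congr rfl fun j _ => by rw [eval_smul, smul_eq_mul]
  have key : ∀ i : Fin (p+1),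
      ∫ x in (-1:ℝ)..1, (L i).eval x * v.eval x = c i * (2/(2*((i:ℕ):ℝ)+1)) := by
    intro i
    have hpt : Set.EqOn (fun x => (L i).eval x * v.eval x)
        (fun x => ∑ j : Fin (p+1), c j * ((L i).eval x * (L j).eval x))
        (Set.uIcc (-1:ℝ) 1) := by
      intro x _
      simp only
      rw [hvx x, Finset.mul_sum]
      refine Finset.sum_congr rfl fun j _ => ?_
      ring
    rw [intervalIntegral.integral_congr hpt]
    rw [intervalIntegral.integral_finset_sum
      (f := fun (j : Fin (p+1)) (x : ℝ) => c j * ((L (i:ℕ)).eval x * (L (j:ℕ)).eval x))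
      (fun j _ =>
        ((continuous_const.mul ((L (i:ℕ)).continuous.mul (L (j:ℕ)).continuous))).intervalIntegrable _ _)]
    rw [Finset.sum_eq_single i]
    · rw [intervalIntegral.integral_const_mul, L_norm (i:ℕ)]
    · intro j _ hj
      have hij : (j:ℕ) ≠ (i:ℕ) := fun h => hj (Fin.ext h)
      have hz : ∫ x in (-1:ℝ)..1, (L (i:ℕ)).eval x * (L (j:ℕ)).eval x = 0 := by
        rcases lt_or_gt_of_ne hij with h | h
        · exact L_orth (i:ℕ) (L (j:ℕ)) (lt_of_le_of_lt (L_natDegree_le (j:ℕ)) h)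
        · rw [intervalIntegral.integral_congr (fun x _ => mul_comm ((L (i:ℕ)).eval x) ((L (j:ℕ)).eval x))]
          exact L_orth (j:ℕ) (L (i:ℕ)) (lt_of_le_of_lt (L_natDegree_le (i:ℕ)) h)
      rw [intervalIntegral.integral_const_mul, hz, mul_zero]
    · intro h; exact absurd (Finset.mem_univ i) h
  have hInt : ∫ x in (-1:ℝ)..1, (v.eval x)^2
      = ∑ i : Fin (p+1), (c i)^2 * (2/(2*((i:ℕ):ℝ)+1)) := by
    have hpt : Set.EqOn (fun x => (v.eval x)^2)
        (fun x => ∑ i : Fin (p+1), c i * ((L i).eval x * v.eval x)) (Set.uIcc (-1:ℝ) 1) := by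
      intro x _
      simp only
      rw [sq]
      nth_rewrite 1 [hvx x]
      rw [Finset.sum_mul]
      refine Finset.sum_congr rfl fun i _ => ?_
      ring
    rw [intervalIntegral.integral_congr hpt]
    rw [intervalIntegral.integral_finset_sum
      (f := fun (i : Fin (p+1)) (x : ℝ) => c i * ((L (i:ℕ)).eval x * v.eval x))
      (fun i _ =>
        ((continuous_const.mul ((L (i:ℕ)).continuous.mul v.continuous))).intervalIntegrable _ _)]
    refine Finset.sum_congr rfl fun i _ => ?_
    rw [intervalIntegral.integral_const_mul, key i, sq]; ring
  -- Cauchy-Schwarz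
  have hcs := Finset.sum_mul_sq_le_sq_mul_sq Finset.univ
    (fun i : Fin (p+1) => Real.sqrt ((2*((i:ℕ):ℝ)+1)/2))
    (fun i : Fin (p+1) => Real.sqrt (2/(2*((i:ℕ):ℝ)+1)) * c i)
  have hone : ∀ i : Fin (p+1),
      Real.sqrt ((2*((i:ℕ):ℝ)+1)/2) * (Real.sqrt (2/(2*((i:ℕ):ℝ)+1)) * c i) = c i := by
    intro i
    have hpos : (0:ℝ) < 2*((i:ℕ):ℝ)+1 := by positivity
    rw [← mul_assoc, ← Real.sqrt_mul (by positivity),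
      show ((2*((i:ℕ):ℝ)+1)/2) * (2/(2*((i:ℕ):ℝ)+1)) = 1 by field_simp, Real.sqrt_one, one_mul]
  have hsq1 : ∀ i : Fin (p+1), (Real.sqrt ((2*((i:ℕ):ℝ)+1)/2))^2 = (2*((i:ℕ):ℝ)+1)/2 := by
    intro i; rw [Real.sq_sqrt (by positivity)]
  have hsq2 : ∀ i : Fin (p+1),
      (Real.sqrt (2/(2*((i:ℕ):ℝ)+1)) * c i)^2 = (c i)^2 * (2/(2*((i:ℕ):ℝ)+1)) := by
    intro i
    have hpos : (0:ℝ) < 2*((i:ℕ):ℝ)+1 := by positivity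
    rw [mul_pow, Real.sq_sqrt (by positivity)]; ring
  rw [Finset.sum_congr rfl (fun i _ => hone i)] at hcs
  rw [Finset.sum_congr rfl (fun i _ => hsq1 i), Finset.sum_congr rfl (fun i _ => hsq2 i)] at hcs
  have hsum : ∑ i : Fin (p+1), (2*((i:ℕ):ℝ)+1)/2 = ((p:ℝ)+1)^2/2 := by
    rw [← Finset.sum_div, Fin.sum_univ_eq_sum_range (fun i => 2*(i:ℝ)+1), sum_odds]
    push_cast; ring
  rw [hsum] at hcs
  rw [ev1, hInt]
  exact hcs
end

section
/- For every natural number p there exists a nonzero real polynomial v of degree at most p achieving equality in the endpoint trace inequality: (v(1))^2 = ((p+1)^2/2) · ∫_{-1}^{1} v(x)^2 dx. Hence the constant (p+1)^2/2 in the one-dimensional trace inverse estimate is sharp. -/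
open MeasureTheory

open MeasureTheory Polynomial intervalIntegral

noncomputable def J (q : Polynomial ℝ) : ℝ := ∫ x in (-1:ℝ)..1, q.eval x

lemma J_ftc (F : Polynomial ℝ) : J (derivative F) = F.eval 1 - F.eval (-1) := by
  unfold J
  exact integral_eq_sub_of_hasDerivAt (fun x _ => F.hasDerivAt x)
    ((F.derivative.continuous_aeval).intervalIntegrable _ _)

lemma J_add (q r : Polynomial ℝ) : J (q + r) = J q + J r := by
  unfold J
  simp only [eval_add]
  exact integral_add ((q.continuous_aeval).intervalIntegrable _ _)
    ((r.continuous_aeval).intervalIntegrable _ _)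

lemma J_smul (c : ℝ) (q : Polynomial ℝ) : J (c • q) = c * J q := by
  unfold J
  simp only [eval_smul, smul_eq_mul]
  exact integral_const_mul c _

lemma J_C_mul (c : ℝ) (q : Polynomial ℝ) : J (C c * q) = c * J q := by
  rw [← smul_eq_C_mul, J_smul]

lemma J_one : J 1 = 2 := by
  unfold J; simp; norm_num

noncomputable def f (p : ℕ) : Polynomial ℝ := (X ^ 2 - 1) ^ p

noncomputable def R (p : ℕ) : Polynomial ℝ := derivative^[p] (f p)

lemma f_eval_one (p : ℕ) (hp : 0 < p) : (f p).eval 1 = 0 := by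
  simp [f, zero_pow hp.ne']

lemma f_eval_negone (p : ℕ) (hp : 0 < p) : (f p).eval (-1) = 0 := by
  simp [f, zero_pow hp.ne']

-- divisibility with eval tracking at 1
lemma deriv_f_fac1 (p : ℕ) : ∀ m, m ≤ p → ∃ g : Polynomial ℝ,
    derivative^[m] (f p) = (X - 1) ^ (p - m) * g ∧
      g.eval 1 = (p.descFactorial m : ℝ) * 2 ^ p := by
  intro m
  induction m with
  | zero =>
    intro _
    refine ⟨(X + 1) ^ p, ?_, by norm_num⟩
    simp only [Function.iterate_zero, id_eq, f, Nat.sub_zero]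
    rw [show ((X:ℝ[X])^2 - 1) = (X-1)*(X+1) by ring, mul_pow]
  | succ m ih =>
    intro hm
    obtain ⟨g, hg, hg1⟩ := ih (Nat.le_of_succ_le hm)
    obtain ⟨b, hb⟩ : ∃ b, p - m = b + 1 := ⟨p - (m+1), by omega⟩
    refine ⟨((b:ℝ[X])+1) * g + (X - 1) * derivative g, ?_, ?_⟩
    · rw [Function.iterate_succ_apply', hg, hb]
      have hpb : p - (m+1) = b := by omega
      rw [hpb, derivative_mul, derivative_pow]
      simp only [derivative_sub, derivative_X, derivative_one, sub_zero, mul_one, Polynomial.C_eq_natCast]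
      rw [pow_succ]
      push_cast
      ring
    · have hb1 : ((b:ℝ)+1) = ((p - m : ℕ) : ℝ) := by rw [hb]; push_cast; ring
      simp only [eval_add, eval_mul, eval_natCast, eval_sub, eval_X, eval_one, sub_self, zero_mul,
        add_zero, hg1, hb1]
      rw [Nat.descFactorial_succ]
      push_cast
      ring

-- divisibility by (X+1)^(p-m)
lemma deriv_f_fac2 (p : ℕ) : ∀ m, m ≤ p → ∃ g : Polynomial ℝ,
    derivative^[m] (f p) = (X + 1) ^ (p - m) * g := by
  intro m
  induction m with
  | zero =>
    intro _
    refine ⟨(X - 1) ^ p, ?_⟩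
    simp only [Function.iterate_zero, id_eq, f, Nat.sub_zero]
    rw [show ((X:ℝ[X])^2 - 1) = (X+1)*(X-1) by ring, mul_pow]
  | succ m ih =>
    intro hm
    obtain ⟨g, hg⟩ := ih (Nat.le_of_succ_le hm)
    obtain ⟨b, hb⟩ : ∃ b, p - m = b + 1 := ⟨p - (m+1), by omega⟩
    refine ⟨((b:ℝ[X])+1) * g + (X + 1) * derivative g, ?_⟩
    rw [Function.iterate_succ_apply', hg, hb]
    have hpb : p - (m+1) = b := by omega
    rw [hpb, derivative_mul, derivative_pow]
    simp only [derivative_add, derivative_X, derivative_one, add_zero, mul_one,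
      Polynomial.C_eq_natCast]
    rw [pow_succ]
    push_cast
    ring

lemma deriv_f_eval_one (p m : ℕ) (hm : m < p) : (derivative^[m] (f p)).eval 1 = 0 := by
  obtain ⟨g, hg, -⟩ := deriv_f_fac1 p m hm.le
  rw [hg]
  have : p - m ≠ 0 := by omega
  simp [zero_pow this]

lemma deriv_f_eval_negone (p m : ℕ) (hm : m < p) : (derivative^[m] (f p)).eval (-1) = 0 := by
  obtain ⟨g, hg⟩ := deriv_f_fac2 p m hm.le
  rw [hg]
  have : p - m ≠ 0 := by omega
  simp [zero_pow this]

lemma R_eval_one (p : ℕ) : (R p).eval 1 = (p.factorial : ℝ) * 2 ^ p := by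
  obtain ⟨g, hg, hg1⟩ := deriv_f_fac1 p p le_rfl
  rw [R, hg]
  simp [hg1, Nat.descFactorial_self]

-- iterated integration by parts
lemma J_ibp (p : ℕ) : ∀ m, m ≤ p → ∀ q : Polynomial ℝ,
    J (q * derivative^[m] (f p)) = (-1:ℝ)^m * J (derivative^[m] q * f p) := by
  intro m
  induction m with
  | zero => intro _ q; simp
  | succ m ih =>
    intro hm q
    have key : J (q * derivative^[m+1] (f p)) = - J (derivative q * derivative^[m] (f p)) := by
      have hd : derivative (q * derivative^[m] (f p))
          = derivative q * derivative^[m] (f p) + q * derivative^[m+1] (f p) := by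
        rw [derivative_mul, Function.iterate_succ_apply']
      have := J_ftc (q * derivative^[m] (f p))
      rw [hd, J_add] at this
      have h1 := deriv_f_eval_one p m (by omega)
      have h2 := deriv_f_eval_negone p m (by omega)
      simp only [eval_mul, h1, h2, mul_zero, sub_zero, zero_sub] at this
      linarith
    rw [key, ih (by omega) (derivative q), ← Function.iterate_succ_apply]
    ring

lemma J_zero : J 0 = 0 := by unfold J; simp

lemma J_orth (p : ℕ) (q : Polynomial ℝ) (hq : q.natDegree < p) : J (q * R p) = 0 := by
  rw [R, J_ibp p p le_rfl q, Polynomial.iterate_derivative_eq_zero hq]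
  simp [J_zero]

lemma f_monic (p : ℕ) : (f p).Monic := by
  have : ((X:ℝ[X]) ^ 2 - 1).Monic := by
    have := monic_X_pow_sub_C (1:ℝ) (two_ne_zero)
    rwa [C_1] at this
  exact this.pow p

lemma f_natDegree (p : ℕ) : (f p).natDegree = 2 * p := by
  have h2 : ((X:ℝ[X]) ^ 2 - 1).natDegree = 2 := by
    rw [show ((X:ℝ[X])^2 - 1) = X^2 - C 1 by rw [C_1]]
    exact natDegree_X_pow_sub_C
  rw [f, natDegree_pow, h2, mul_comm]

lemma f_degree (p : ℕ) : (f p).degree = (2*p : ℕ) := by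
  rw [degree_eq_natDegree (f_monic p).ne_zero, f_natDegree]

lemma iterate_deriv_add (n : ℕ) (q r : ℝ[X]) :
    derivative^[n] (q + r) = derivative^[n] q + derivative^[n] r := by
  induction n generalizing q r with
  | zero => simp
  | succ n ih => rw [Function.iterate_succ_apply, Function.iterate_succ_apply,
      Function.iterate_succ_apply, derivative_add, ih]

lemma deriv_f_top (p : ℕ) : derivative^[2*p] (f p) = C (((2*p).factorial : ℝ)) := by
  have hX : derivative^[2*p] ((X:ℝ[X]) ^ (2*p)) = C (((2*p).factorial : ℝ)) := by
    rw [Polynomial.iterate_derivative_X_pow_eq_smul, Nat.descFactorial_self, Nat.sub_self,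
      pow_zero, Polynomial.smul_eq_C_mul, mul_one]
  have hdiff : derivative^[2*p] (f p - X ^ (2*p)) = 0 := by
    by_cases h0 : f p - X ^ (2*p) = 0
    · rw [h0]; simp
    · apply Polynomial.iterate_derivative_eq_zero
      have hdeg : (f p - X ^ (2*p)).degree < (f p).degree := by
        apply degree_sub_lt
        · rw [degree_X_pow, f_degree]
        · exact (f_monic p).ne_zero
        · rw [(f_monic p).leadingCoeff, monic_X_pow]
      rw [f_degree] at hdeg
      exact (natDegree_lt_iff_degree_lt h0).2 hdeg
  have hsplit : f p = (f p - X ^ (2*p)) + X ^ (2*p) := by ring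
  rw [hsplit, iterate_deriv_add, hdiff, hX, zero_add]

lemma J_natCast_mul (k : ℕ) (q : Polynomial ℝ) : J ((k : ℝ[X]) * q) = (k:ℝ) * J q := by
  rw [← Polynomial.C_eq_natCast, J_C_mul]

lemma J_f (p : ℕ) : J (f p) =
    (-1:ℝ)^p * 2 * 4^p * (p.factorial : ℝ)^2 / ((2*p+1).factorial : ℝ) := by
  induction p with
  | zero => simpa [f] using J_one
  | succ n ih =>
    -- derivative of X * f (n+1)
    have h1 : derivative (X * f (n+1)) =
        f (n+1) + ((2*n+2 : ℕ) : ℝ[X]) * (X^2 * f n) := by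
      unfold f
      rw [derivative_mul, derivative_pow]
      simp only [derivative_X, derivative_sub, derivative_one, derivative_X_pow,
        Polynomial.C_eq_natCast, mul_one, sub_zero]
      rw [pow_succ]
      push_cast
      ring
    have h2 : J (derivative (X * f (n+1))) = 0 := by
      rw [J_ftc]
      simp [f_eval_one (n+1) (Nat.succ_pos n), f_eval_negone (n+1) (Nat.succ_pos n)]
    have h3 : X^2 * f n = f (n+1) + f n := by
      unfold f; rw [pow_succ]; ring
    rw [h1, h3, J_add, J_natCast_mul, J_add] at h2
    -- h2 : J (f (n+1)) + (2n+2) * (J (f (n+1)) + J (f n)) = 0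
    have hrec : ((2*n+3 : ℕ):ℝ) * J (f (n+1)) = -((2*n+2 : ℕ):ℝ) * J (f n) := by
      push_cast at h2 ⊢
      linear_combination h2
    have hfac3 : (2*(n+1)+1).factorial = (2*n+3) * ((2*n+2) * (2*n+1).factorial) := by
      have e : 2*(n+1)+1 = (2*n+1) + 1 + 1 := by ring
      rw [e, Nat.factorial_succ, Nat.factorial_succ]
    have hfacn : (n+1).factorial = (n+1) * n.factorial := Nat.factorial_succ n
    have h23 : ((2*n+3:ℕ):ℝ) ≠ 0 := by positivity
    have hfne : ((2*n+1).factorial : ℝ) ≠ 0 := Nat.cast_ne_zero.2 (Nat.factorial_ne_zero _)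
    have hfne2 : ((2*(n+1)+1).factorial : ℝ) ≠ 0 := Nat.cast_ne_zero.2 (Nat.factorial_ne_zero _)
    -- solve for J (f (n+1))
    have := hrec
    rw [ih] at this
    field_simp at this ⊢
    rw [hfac3, hfacn]
    push_cast at this ⊢
    linear_combination (2*(n:ℝ)+2) * this

lemma J_RR (p : ℕ) : J (R p * R p) = 2 * 4^p * (p.factorial : ℝ)^2 / (2*p+1) := by
  have h1 : J (R p * R p) = (-1:ℝ)^p * J (derivative^[p] (R p) * f p) :=
    J_ibp p p le_rfl (R p)
  have h2 : derivative^[p] (R p) = C (((2*p).factorial : ℝ)) := by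
    rw [R, ← Function.iterate_add_apply, ← deriv_f_top]
    congr 1
    omega
  rw [h1, h2, J_C_mul, J_f]
  have hfac : ((2*p+1).factorial : ℝ) = (2*p+1) * ((2*p).factorial : ℝ) := by
    rw [Nat.factorial_succ]; push_cast; ring
  have hfne : ((2*p).factorial : ℝ) ≠ 0 := Nat.cast_ne_zero.2 (Nat.factorial_ne_zero _)
  have h2p1 : ((2*p:ℕ):ℝ) + 1 ≠ 0 := by positivity
  rw [hfac]
  have hsq : ((-1:ℝ)^p) * ((-1:ℝ)^p) = 1 := by
    rw [← pow_add, Even.neg_one_pow ⟨p, by ring⟩]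
  field_simp
  linear_combination hsq

lemma J_sum {s : Finset ℕ} (F : ℕ → Polynomial ℝ) :
    J (∑ i ∈ s, F i) = ∑ i ∈ s, J (F i) := by
  classical
  induction s using Finset.induction with
  | empty => simp [J_zero]
  | @insert a s h ih => rw [Finset.sum_insert h, Finset.sum_insert h, J_add, ih]

lemma R_natDegree_le (k : ℕ) : (R k).natDegree ≤ k := by
  have := Polynomial.natDegree_iterate_derivative (f k) k
  rw [f_natDegree] at this
  rw [R]
  omega

lemma J_RR_cross {j k : ℕ} (h : j ≠ k) : J (R j * R k) = 0 := by
  rcases lt_or_gt_of_ne h with hlt | hgt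
  · exact J_orth k (R j) (lt_of_le_of_lt (R_natDegree_le j) hlt)
  · rw [mul_comm]
    exact J_orth j (R k) (lt_of_le_of_lt (R_natDegree_le k) hgt)

noncomputable def c (k : ℕ) : ℝ := (2*k+1) / (2 * 2^k * k.factorial)

lemma c_R_one (k : ℕ) : c k * (R k).eval 1 = (2*(k:ℝ)+1)/2 := by
  rw [R_eval_one, c]
  have h1 : (2:ℝ)^k ≠ 0 := by positivity
  have h2 : (k.factorial : ℝ) ≠ 0 := Nat.cast_ne_zero.2 (Nat.factorial_ne_zero _)
  field_simp

lemma c_sq_N (k : ℕ) : c k * (c k * J (R k * R k)) = (2*(k:ℝ)+1)/2 := by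
  rw [J_RR, c]
  have h1 : (2:ℝ)^k ≠ 0 := by positivity
  have h2 : (k.factorial : ℝ) ≠ 0 := Nat.cast_ne_zero.2 (Nat.factorial_ne_zero _)
  have h3 : (2*(k:ℝ)+1) ≠ 0 := by positivity
  have h4 : ((2*k:ℕ):ℝ)+1 ≠ 0 := by positivity
  field_simp
  rw [show (4:ℝ)^k = 2^k * 2^k by rw [← mul_pow]; norm_num]
  ring

lemma sum_odd (p : ℕ) : ∑ k ∈ Finset.range (p+1), (2*(k:ℝ)+1)/2 = ((p:ℝ)+1)^2/2 := by
  induction p with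
  | zero => norm_num
  | succ n ih =>
    rw [Finset.sum_range_succ, ih]
    push_cast
    ring


/-- Sharpness of the one-dimensional trace inverse estimate: for every `p` there is a nonzero
polynomial `v` of degree at most `p` with `(v 1)^2 = ((p+1)^2/2) ∫_{-1}^{1} v(x)^2 dx`. -/
theorem trace_inverse_estimate_1d_sharp (p : ℕ) :
    ∃ v : Polynomial ℝ, v ≠ 0 ∧ v.degree ≤ (p : ℕ) ∧
      (v.eval 1) ^ 2 = (((p : ℝ) + 1) ^ 2 / 2) * ∫ x in (-1 : ℝ)..1, (v.eval x) ^ 2 := by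
  set v : Polynomial ℝ := ∑ k ∈ Finset.range (p+1), C (c k) * R k with hv
  have hv1 : v.eval 1 = ((p:ℝ)+1)^2/2 := by
    rw [hv, eval_finset_sum]
    simp only [eval_mul, eval_C]
    rw [← sum_odd p]
    exact Finset.sum_congr rfl fun k _ => c_R_one k
  have hint : (∫ x in (-1:ℝ)..1, (v.eval x) ^ 2) = ((p:ℝ)+1)^2/2 := by
    have hJ : (∫ x in (-1:ℝ)..1, (v.eval x) ^ 2) = J (v * v) := by
      unfold J
      congr 1
      ext x
      rw [eval_mul, sq]
    rw [hJ]
    have hvv : v * v = ∑ j ∈ Finset.range (p+1), (C (c j) * (R j * v)) := by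
      rw [hv, Finset.sum_mul]
      exact Finset.sum_congr rfl fun j _ => by ring
    rw [hvv, J_sum]
    have hterm : ∀ j ∈ Finset.range (p+1), J (C (c j) * (R j * v)) = (2*(j:ℝ)+1)/2 := by
      intro j hj
      have hRv : R j * v = ∑ k ∈ Finset.range (p+1), (C (c k) * (R j * R k)) := by
        rw [hv, Finset.mul_sum]
        exact Finset.sum_congr rfl fun k _ => by ring
      rw [J_C_mul, hRv, J_sum]
      have : ∀ k ∈ Finset.range (p+1), k ≠ j → J (C (c k) * (R j * R k)) = 0 := by
        intro k _ hkj
        rw [J_C_mul, J_RR_cross (Ne.symm hkj), mul_zero]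
      rw [Finset.sum_eq_single j this (by intro h; exact absurd hj h), J_C_mul]
      exact c_sq_N j
    rw [Finset.sum_congr rfl hterm, sum_odd]
  have hpos : (0:ℝ) < ((p:ℝ)+1)^2/2 := by positivity
  refine ⟨v, ?_, ?_, ?_⟩
  · intro h0
    rw [h0] at hv1
    simp at hv1
    exact absurd hv1.symm hpos.ne'
  · have hnat : v.natDegree ≤ p := by
      apply Polynomial.natDegree_sum_le_of_forall_le
      intro k hk
      calc (C (c k) * R k).natDegree ≤ (R k).natDegree := natDegree_C_mul_le _ _
        _ ≤ k := R_natDegree_le k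
        _ ≤ p := by simpa [Nat.lt_succ_iff] using hk
    calc v.degree ≤ v.natDegree := degree_le_natDegree
      _ ≤ (p : WithBot ℕ) := by exact_mod_cast hnat
  · rw [hv1, hint]
    ring
end

section
/- There exists a constant C > 0 such that for every natural number n ≥ 1 and every real polynomial v of degree at most n, the L2 norm of the derivative over [-1,1] satisfies ∫_{-1}^{1} (v′(x))² dx ≤ C · n⁴ · ∫_{-1}^{1} v(x)² dx. -/
open MeasureTheory Polynomial Finset Nat

namespace InvEst1D

noncomputable def Iint (p : Polynomial ℝ) : ℝ := ∫ x in (-1:ℝ)..1, p.eval x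

lemma intInt (p : Polynomial ℝ) :
    IntervalIntegrable (fun x => p.eval x) volume (-1:ℝ) 1 :=
  p.continuous.intervalIntegrable _ _

lemma Iint_add (p q : Polynomial ℝ) : Iint (p + q) = Iint p + Iint q := by
  simp only [Iint, eval_add]
  exact intervalIntegral.integral_add (intInt p) (intInt q)

lemma Iint_C_mul (c : ℝ) (p : Polynomial ℝ) : Iint (C c * p) = c * Iint p := by
  simp only [Iint, eval_mul, eval_C]
  exact intervalIntegral.integral_const_mul c _

lemma Iint_zero : Iint 0 = 0 := by simp [Iint]

lemma Iint_sum {ι : Type*} (s : Finset ι) (f : ι → Polynomial ℝ) :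
    Iint (∑ i ∈ s, f i) = ∑ i ∈ s, Iint (f i) := by
  simp only [Iint, eval_finset_sum]
  exact intervalIntegral.integral_finset_sum (fun i _ => intInt (f i))

lemma Iint_sq_nonneg (p : Polynomial ℝ) : 0 ≤ Iint (p * p) := by
  apply intervalIntegral.integral_nonneg (by norm_num)
  intro x _
  simp only [eval_mul]
  exact mul_self_nonneg _

lemma Iint_deriv (p : Polynomial ℝ) :
    Iint (derivative p) = p.eval 1 - p.eval (-1) := by
  simpa [Iint] using intervalIntegral.integral_deriv_eq_sub'
    (f := fun x => p.eval x) (f' := fun x => (derivative p).eval x)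
    (a := (-1:ℝ)) (b := 1)
    (funext fun x => Polynomial.deriv _)
    (fun x _ => p.differentiableAt)
    (derivative p).continuous.continuousOn

lemma Iint_parts (p q : Polynomial ℝ) :
    Iint (derivative p * q) =
      p.eval 1 * q.eval 1 - p.eval (-1) * q.eval (-1) - Iint (p * derivative q) := by
  have h := Iint_deriv (p * q)
  rw [derivative_mul, Iint_add] at h
  simp only [eval_mul] at h
  linarith


/-- Key structural lemma: iterated derivatives of `(X - a)^k * r`. -/
lemma key_struct (a : ℝ) (k : ℕ) (r : Polynomial ℝ) :
    ∀ j, j ≤ k → ∃ s : Polynomial ℝ,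
      derivative^[j] ((X - C a) ^ k * r) = (X - C a) ^ (k - j) * s ∧
      s.eval a = (k.descFactorial j : ℝ) * r.eval a ∧
      (derivative s).eval a = ((k + 1).descFactorial j : ℝ) * (derivative r).eval a := by
  intro j
  induction j with
  | zero => intro _; exact ⟨r, by simp⟩
  | succ j ih =>
    intro hj
    have hjk : j < k := Nat.lt_of_succ_le hj
    obtain ⟨s, hs, hev, hev'⟩ := ih hjk.le
    refine ⟨C ((k - j : ℕ) : ℝ) * s + (X - C a) * derivative s, ?_, ?_, ?_⟩
    · rw [Function.iterate_succ_apply', hs, derivative_mul, derivative_pow]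
      have h1 : derivative (X - C a) = 1 := by simp
      have h2 : (X - C a) ^ (k - j) = (X - C a) ^ (k - (j + 1)) * (X - C a) := by
        rw [← pow_succ]; congr 1; omega
      have h3 : (X - C a) ^ (k - j - 1) = (X - C a) ^ (k - (j + 1)) := by rw [Nat.sub_sub]
      rw [h1, h3, h2]
      ring
    · have h4 : (k.descFactorial (j + 1) : ℝ) = ((k - j : ℕ) : ℝ) * (k.descFactorial j : ℝ) := by
        rw [Nat.descFactorial_succ]; push_cast; ring
      simp [hev, h4]; ring
    · have h5 : ((k + 1).descFactorial (j + 1) : ℝ) =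
          ((k - j : ℕ) + 1 : ℝ) * ((k + 1).descFactorial j : ℝ) := by
        rw [Nat.descFactorial_succ]
        have : k + 1 - j = (k - j) + 1 := by omega
        rw [this]; push_cast; ring
      have h6 : derivative (C ((k - j : ℕ) : ℝ) * s + (X - C a) * derivative s) =
          C ((k - j : ℕ) : ℝ) * derivative s + (1 * derivative s + (X - C a) * derivative (derivative s)) := by
        rw [derivative_add, derivative_C_mul, derivative_mul]
        simp
      rw [h6, h5]
      have h8 : ((k - j : ℕ) : ℝ) = (k : ℝ) - j := by
        rw [Nat.cast_sub hjk.le]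
      simp only [eval_add, eval_mul, eval_C, eval_one, eval_sub, eval_X, one_mul,
        sub_self, zero_mul, add_zero, hev', h8]
      ring


noncomputable def Wp : Polynomial ℝ := X ^ 2 - 1

noncomputable def qp (k : ℕ) : Polynomial ℝ := derivative^[k] (Wp ^ k)

lemma Wp_factor1 : Wp = (X - C 1) * (X - C (-1)) := by
  simp only [Wp, map_one, map_neg]; ring

lemma Wp_factor2 : Wp = (X - C (-1)) * (X - C 1) := by
  rw [Wp_factor1]; ring

lemma Wp_pow_factor1 (k : ℕ) : Wp ^ k = (X - C 1) ^ k * (X - C (-1)) ^ k := by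
  rw [← mul_pow, ← Wp_factor1]

lemma Wp_pow_factor2 (k : ℕ) : Wp ^ k = (X - C (-1)) ^ k * (X - C 1) ^ k := by
  rw [← mul_pow, ← Wp_factor2]

lemma vanish_one {k j : ℕ} (hjk : j < k) : (derivative^[j] (Wp ^ k)).eval 1 = 0 := by
  obtain ⟨s, hs, -, -⟩ := key_struct 1 k ((X - C (-1)) ^ k) j hjk.le
  rw [Wp_pow_factor1, hs]
  simp [zero_pow (by omega : k - j ≠ 0)]

lemma vanish_negone {k j : ℕ} (hjk : j < k) : (derivative^[j] (Wp ^ k)).eval (-1) = 0 := by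
  obtain ⟨s, hs, -, -⟩ := key_struct (-1) k ((X - C 1) ^ k) j hjk.le
  rw [Wp_pow_factor2, hs]
  simp [zero_pow (by omega : k - j ≠ 0)]

lemma descFactorial_succ_self (k : ℕ) : (k + 1).descFactorial k = (k + 1)! := by
  conv_rhs => rw [← Nat.descFactorial_self (k + 1)]
  rw [Nat.descFactorial_succ, (by omega : k + 1 - k = 1), one_mul]

lemma qp_eval_one (k : ℕ) : (qp k).eval 1 = (k ! : ℝ) * 2 ^ k := by
  obtain ⟨s, hs, hev, -⟩ := key_struct 1 k ((X - C (-1)) ^ k) k le_rfl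
  have : qp k = s := by
    rw [qp, Wp_pow_factor1, hs, Nat.sub_self, pow_zero, one_mul]
  rw [this, hev, Nat.descFactorial_self]
  norm_num

lemma qp_eval_negone (k : ℕ) : (qp k).eval (-1) = (k ! : ℝ) * (-2) ^ k := by
  obtain ⟨s, hs, hev, -⟩ := key_struct (-1) k ((X - C 1) ^ k) k le_rfl
  have : qp k = s := by
    rw [qp, Wp_pow_factor2, hs, Nat.sub_self, pow_zero, one_mul]
  rw [this, hev, Nat.descFactorial_self]
  norm_num

lemma dqp_eval_one (k : ℕ) :
    (derivative (qp k)).eval 1 = ((k + 1)! : ℝ) * (k * 2 ^ (k - 1)) := by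
  obtain ⟨s, hs, -, hev'⟩ := key_struct 1 k ((X - C (-1)) ^ k) k le_rfl
  have hqs : qp k = s := by
    rw [qp, Wp_pow_factor1, hs, Nat.sub_self, pow_zero, one_mul]
  rw [hqs, hev', descFactorial_succ_self]
  congr 1
  rw [derivative_pow]
  simp
  norm_num

lemma dqp_eval_negone (k : ℕ) :
    (derivative (qp k)).eval (-1) = ((k + 1)! : ℝ) * (k * (-2) ^ (k - 1)) := by
  obtain ⟨s, hs, -, hev'⟩ := key_struct (-1) k ((X - C 1) ^ k) k le_rfl
  have hqs : qp k = s := by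
    rw [qp, Wp_pow_factor2, hs, Nat.sub_self, pow_zero, one_mul]
  rw [hqs, hev', descFactorial_succ_self]
  congr 1
  rw [derivative_pow]
  simp
  norm_num


lemma parts_iter (k : ℕ) (g : Polynomial ℝ) :
    ∀ m, m ≤ k → Iint (qp k * g) =
      (-1 : ℝ) ^ m * Iint (derivative^[k - m] (Wp ^ k) * derivative^[m] g) := by
  intro m
  induction m with
  | zero => intro _; simp [qp]
  | succ m ih =>
    intro hm
    have hmk : m ≤ k := by omega
    rw [ih hmk]
    have hit : derivative^[k - m] (Wp ^ k) = derivative (derivative^[k - (m + 1)] (Wp ^ k)) := by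
      rw [(by omega : k - m = (k - (m + 1)) + 1), Function.iterate_succ_apply']
    rw [hit, Iint_parts]
    rw [vanish_one (by omega : k - (m + 1) < k), vanish_negone (by omega : k - (m + 1) < k)]
    rw [← Function.iterate_succ_apply' derivative m g]
    ring

lemma orth (k : ℕ) (g : Polynomial ℝ) (h : g.natDegree < k) : Iint (qp k * g) = 0 := by
  have h2 := parts_iter k g k le_rfl
  rw [iterate_derivative_eq_zero h, mul_zero, Iint_zero, mul_zero] at h2
  exact h2

lemma Wp_monic : (Wp).Monic := by
  have : Wp = X ^ 2 - C 1 := by rw [Wp, map_one]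
  rw [this]
  exact monic_X_pow_sub_C 1 (by norm_num)

lemma Wp_natDegree : (Wp).natDegree = 2 := by
  have : Wp = X ^ 2 - C 1 := by rw [Wp, map_one]
  rw [this, natDegree_X_pow_sub_C]

lemma Wp_pow_natDegree (k : ℕ) : (Wp ^ k).natDegree = 2 * k := by
  rw [Wp_monic.natDegree_pow, Wp_natDegree, Nat.mul_comm]

lemma iter_deriv_top (k : ℕ) : derivative^[2 * k] (Wp ^ k) = C (((2 * k)! : ℝ)) := by
  have hdeg : (derivative^[2 * k] (Wp ^ k)).natDegree ≤ 0 := by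
    have := natDegree_iterate_derivative (Wp ^ k) (2 * k)
    rw [Wp_pow_natDegree] at this
    omega
  rw [eq_C_of_natDegree_le_zero hdeg]
  congr 1
  rw [coeff_iterate_derivative]
  simp only [zero_add]
  rw [(by rw [Wp_pow_natDegree] : (2 * k) = (Wp ^ k).natDegree), (Wp_monic.pow k).coeff_natDegree]
  simp [Nat.descFactorial_self]

lemma qp_sq (k : ℕ) :
    Iint (qp k * qp k) = (-1 : ℝ) ^ k * ((2 * k)! : ℝ) * Iint (Wp ^ k) := by
  have h := parts_iter k (qp k) k le_rfl
  rw [Nat.sub_self, Function.iterate_zero_apply] at h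
  have : derivative^[k] (qp k) = C (((2 * k)! : ℝ)) := by
    rw [qp, ← Function.iterate_add_apply, ← two_mul, iter_deriv_top]
  rw [this] at h
  rw [h, (by ring : Wp ^ k * C (((2 * k)! : ℝ)) = C (((2 * k)! : ℝ)) * Wp ^ k), Iint_C_mul]
  ring

lemma Iint_one : Iint 1 = 2 := by simp [Iint]; norm_num

lemma deriv_XW (k : ℕ) : derivative (X * Wp ^ (k + 1)) =
    C ((2 * (k : ℝ) + 3)) * Wp ^ (k + 1) + C (2 * (k : ℝ) + 2) * Wp ^ k := by
  rw [derivative_mul, derivative_X, derivative_pow]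
  simp only [Wp, derivative_sub, derivative_one, derivative_X_pow]
  simp only [map_add, map_mul, map_ofNat, map_natCast, map_one, Nat.add_sub_cancel]
  push_cast
  ring


lemma J_rec (k : ℕ) :
    (2 * (k : ℝ) + 3) * Iint (Wp ^ (k + 1)) + (2 * (k : ℝ) + 2) * Iint (Wp ^ k) = 0 := by
  have h := Iint_deriv (X * Wp ^ (k + 1))
  rw [deriv_XW, Iint_add, Iint_C_mul, Iint_C_mul] at h
  have e1 : (X * Wp ^ (k + 1)).eval 1 = 0 := by simp [Wp]
  have e2 : (X * Wp ^ (k + 1)).eval (-1) = 0 := by simp [Wp]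
  rw [e1, e2] at h
  linarith

lemma J_closed : ∀ k : ℕ,
    Iint (Wp ^ k) = (-1 : ℝ) ^ k * (2 * 4 ^ k * ((k ! : ℕ) : ℝ) ^ 2 / (((2 * k + 1)! : ℕ) : ℝ)) := by
  intro k
  induction k with
  | zero => simpa using Iint_one
  | succ k ih =>
    have hrec := J_rec k
    rw [ih] at hrec
    have h3 : (2 * (k : ℝ) + 3) ≠ 0 := by positivity
    have hne1 : (((2 * k + 1)! : ℕ) : ℝ) ≠ 0 := Nat.cast_ne_zero.2 (Nat.factorial_ne_zero _)
    have hval : Iint (Wp ^ (k + 1)) =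
        -((2 * (k : ℝ) + 2) * ((-1 : ℝ) ^ k *
          (2 * 4 ^ k * ((k ! : ℕ) : ℝ) ^ 2 / (((2 * k + 1)! : ℕ) : ℝ)))) / (2 * (k : ℝ) + 3) := by
      field_simp at hrec ⊢
      linarith
    rw [hval]
    have hfac : (((2 * (k + 1) + 1)! : ℕ) : ℝ) =
        (2 * (k : ℝ) + 3) * ((2 * (k : ℝ) + 2) * (((2 * k + 1)! : ℕ) : ℝ)) := by
      have h0 : 2 * (k + 1) + 1 = (2 * k + 1) + 1 + 1 := by omega
      rw [h0, Nat.factorial_succ, Nat.factorial_succ]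
      push_cast; ring
    have hfacs : (((k + 1)! : ℕ) : ℝ) = ((k : ℝ) + 1) * ((k ! : ℕ) : ℝ) := by
      rw [Nat.factorial_succ]; push_cast; ring
    rw [hfac, hfacs]
    field_simp
    ring


lemma Nq_eq (k : ℕ) :
    Iint (qp k * qp k) = 2 * 4 ^ k * ((k ! : ℕ) : ℝ) ^ 2 / (2 * (k : ℝ) + 1) := by
  rw [qp_sq, J_closed]
  have hfac : (((2 * k + 1)! : ℕ) : ℝ) = (2 * (k : ℝ) + 1) * (((2 * k)! : ℕ) : ℝ) := by
    rw [Nat.factorial_succ]; push_cast; ring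
  have hs : ((-1 : ℝ) ^ k) * ((-1 : ℝ) ^ k) = 1 := by
    rw [← mul_pow]; norm_num
  have hne : (((2 * k)! : ℕ) : ℝ) ≠ 0 := Nat.cast_ne_zero.2 (Nat.factorial_ne_zero _)
  have hne2 : (2 * (k : ℝ) + 1) ≠ 0 := by positivity
  rw [hfac]
  field_simp
  linear_combination hs

lemma Nq_pos (k : ℕ) : 0 < Iint (qp k * qp k) := by
  rw [Nq_eq]
  have h1 : (0:ℝ) < ((k ! : ℕ) : ℝ) := Nat.cast_pos.2 (Nat.factorial_pos _)
  positivity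

lemma qp_natDegree_le (k : ℕ) : (qp k).natDegree ≤ k := by
  have := natDegree_iterate_derivative (Wp ^ k) k
  rw [Wp_pow_natDegree] at this
  rw [qp]
  omega

lemma Dq_eq (k : ℕ) :
    Iint (derivative (qp k) * derivative (qp k)) =
      ((k ! : ℕ) : ℝ) * (((k + 1)! : ℕ) : ℝ) * k * 4 ^ k := by
  rcases Nat.eq_zero_or_pos k with hk | hk
  · subst hk
    have : qp 0 = 1 := by simp [qp]
    rw [this]
    simp [Iint_zero]
  · obtain ⟨m, rfl⟩ : ∃ m, k = m + 1 := ⟨k - 1, by omega⟩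
    have h := Iint_parts (qp (m + 1)) (derivative (qp (m + 1)))
    have horth : Iint (qp (m + 1) * derivative (derivative (qp (m + 1)))) = 0 := by
      apply orth
      have h1 := natDegree_derivative_le (qp (m + 1))
      have h2 := natDegree_derivative_le (derivative (qp (m + 1)))
      have h3 := qp_natDegree_le (m + 1)
      omega
    rw [horth, sub_zero, qp_eval_one, qp_eval_negone, dqp_eval_one, dqp_eval_negone] at h
    rw [h]
    simp only [Nat.add_sub_cancel]
    have hs : ((-1 : ℝ) ^ m) * ((-1 : ℝ) ^ m) = 1 := by rw [← mul_pow]; norm_num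
    have hng : ((-2 : ℝ)) ^ m = (-1) ^ m * 2 ^ m := by rw [neg_pow]
    have h4 : (4 : ℝ) ^ m = (2 ^ m) * (2 ^ m) := by
      rw [(by norm_num : (4:ℝ) = 2 * 2), mul_pow]
    simp only [pow_succ, hng, h4]
    push_cast
    linear_combination (2 * (((m + 1)! : ℕ) : ℝ) * (((m + 2)! : ℕ) : ℝ) * ((m : ℝ) + 1) *
      (2 ^ m) * (2 ^ m)) * hs

lemma Dq_le (k : ℕ) :
    Iint (derivative (qp k) * derivative (qp k)) ≤ 3 * (k : ℝ) ^ 3 * Iint (qp k * qp k) := by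
  rw [Dq_eq, Nq_eq]
  have hfacs : (((k + 1)! : ℕ) : ℝ) = ((k : ℝ) + 1) * ((k ! : ℕ) : ℝ) := by
    rw [Nat.factorial_succ]; push_cast; ring
  rw [hfacs]
  have hA : (0:ℝ) < ((k ! : ℕ) : ℝ) := Nat.cast_pos.2 (Nat.factorial_pos _)
  have hP : (0:ℝ) < (4:ℝ) ^ k := by positivity
  have hc : (0:ℝ) < 2 * (k:ℝ) + 1 := by positivity
  rw [mul_div_assoc', le_div_iff₀ hc]
  have key : (k:ℝ) * ((k:ℝ) + 1) * (2 * (k:ℝ) + 1) ≤ 6 * (k:ℝ) ^ 3 := by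
    rcases Nat.eq_zero_or_pos k with h | h
    · subst h; norm_num
    · have h1 : (1:ℝ) ≤ (k:ℝ) := by exact_mod_cast h
      have hp : (0:ℝ) ≤ (k:ℝ) * (4 * (k:ℝ) + 1) * ((k:ℝ) - 1) :=
        mul_nonneg (mul_nonneg (by linarith) (by linarith)) (by linarith)
      nlinarith [hp]
  nlinarith [mul_le_mul_of_nonneg_right key
    (le_of_lt (mul_pos (mul_pos hA hA) hP))]

lemma Iint_CS (p q : Polynomial ℝ) :
    |Iint (p * q)| ≤ Real.sqrt (Iint (p * p)) * Real.sqrt (Iint (q * q)) := by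
  have hA := Iint_sq_nonneg p
  have hB := Iint_sq_nonneg q
  have hquad : ∀ t : ℝ, 0 ≤ Iint (q * q) * (t * t) + (2 * Iint (p * q)) * t + Iint (p * p) := by
    intro t
    have hexp : (p + C t * q) * (p + C t * q) =
        p * p + C (2 * t) * (p * q) + C (t * t) * (q * q) := by
      simp only [map_mul, map_ofNat]
      ring
    have hnn := Iint_sq_nonneg (p + C t * q)
    rw [hexp, Iint_add, Iint_add, Iint_C_mul, Iint_C_mul] at hnn
    nlinarith [hnn]
  have hd := discrim_le_zero hquad
  rw [discrim] at hd
  have hT2 : (Iint (p * q)) ^ 2 ≤ Iint (p * p) * Iint (q * q) := by nlinarith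
  calc |Iint (p * q)| = Real.sqrt ((Iint (p * q)) ^ 2) := (Real.sqrt_sq_eq_abs _).symm
    _ ≤ Real.sqrt (Iint (p * p) * Iint (q * q)) := Real.sqrt_le_sqrt hT2
    _ = _ := Real.sqrt_mul hA _

lemma qp_coeff (k : ℕ) : (qp k).coeff k = (((2 * k).descFactorial k : ℕ) : ℝ) := by
  rw [qp, coeff_iterate_derivative]
  have h1 : k + k = 2 * k := by omega
  have h2 : (Wp ^ k).coeff (2 * k) = 1 := by
    rw [(by rw [Wp_pow_natDegree] : 2 * k = (Wp ^ k).natDegree)]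
    exact (Wp_monic.pow k).coeff_natDegree
  rw [h1, h2]
  simp

lemma qp_coeff_ne (k : ℕ) : (qp k).coeff k ≠ 0 := by
  rw [qp_coeff]
  have : 0 < (2 * k).descFactorial k := by
    rw [Nat.descFactorial_eq_factorial_mul_choose]
    exact Nat.mul_pos (Nat.factorial_pos _) (Nat.choose_pos (by omega))
  exact_mod_cast this.ne'

lemma expand : ∀ n : ℕ, ∀ v : Polynomial ℝ, v.natDegree ≤ n →
    ∃ a : ℕ → ℝ, v = ∑ k ∈ range (n + 1), C (a k) * qp k := by
  intro n
  induction n with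
  | zero =>
    intro v hv
    refine ⟨fun _ => v.coeff 0, ?_⟩
    rw [eq_C_of_natDegree_le_zero hv]
    simp [qp]
  | succ n ih =>
    intro v hv
    set c := v.coeff (n + 1) / (qp (n + 1)).coeff (n + 1) with hc
    have hu : (v - C c * qp (n + 1)).natDegree ≤ n := by
      rw [natDegree_le_iff_coeff_eq_zero]
      intro m hm
      rw [coeff_sub, coeff_C_mul]
      rcases eq_or_lt_of_le (Nat.succ_le_of_lt hm) with h | h
      · rw [← h, hc, div_mul_cancel₀ _ (qp_coeff_ne (n + 1)), sub_self]
      · rw [coeff_eq_zero_of_natDegree_lt (lt_of_le_of_lt hv h),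
          coeff_eq_zero_of_natDegree_lt (lt_of_le_of_lt (qp_natDegree_le (n + 1)) h)]
        simp
    obtain ⟨a, ha⟩ := ih _ hu
    refine ⟨Function.update a (n + 1) c, ?_⟩
    rw [Finset.sum_range_succ]
    have hcong : ∑ k ∈ range (n + 1), C (Function.update a (n + 1) c k) * qp k
        = ∑ k ∈ range (n + 1), C (a k) * qp k := by
      apply Finset.sum_congr rfl
      intro k hk
      have : k ≠ n + 1 := by simp only [mem_range] at hk; omega
      rw [Function.update_of_ne this]
    rw [hcong, Function.update_self, ← ha]
    ring

lemma orth' {j k : ℕ} (h : j ≠ k) : Iint (qp j * qp k) = 0 := by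
  rcases lt_or_gt_of_ne h with hlt | hgt
  · rw [mul_comm]
    exact orth k (qp j) (lt_of_le_of_lt (qp_natDegree_le j) hlt)
  · exact orth j (qp k) (lt_of_le_of_lt (qp_natDegree_le k) hgt)

lemma Iint_mul_sum (s : Finset ℕ) (a b : ℕ → ℝ) (f g : ℕ → Polynomial ℝ) :
    Iint ((∑ j ∈ s, C (a j) * f j) * (∑ k ∈ s, C (b k) * g k)) =
      ∑ j ∈ s, ∑ k ∈ s, a j * b k * Iint (f j * g k) := by
  rw [Finset.sum_mul_sum, Iint_sum]
  apply Finset.sum_congr rfl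
  intro j _
  rw [Iint_sum]
  apply Finset.sum_congr rfl
  intro k _
  have : (C (a j) * f j) * (C (b k) * g k) = C (a j * b k) * (f j * g k) := by
    rw [map_mul]; ring
  rw [this, Iint_C_mul]

lemma sum_cubes_le (n : ℕ) : ∑ k ∈ range (n + 1), ((k : ℝ)) ^ 3 ≤ ((n : ℝ)) ^ 4 := by
  induction n with
  | zero => simp
  | succ n ih =>
    rw [Finset.sum_range_succ]
    push_cast
    push_cast at ih
    have h3 : ((n : ℝ)) ^ 3 ≤ ((n : ℝ) + 1) ^ 3 := by nlinarith [Nat.cast_nonneg (α := ℝ) n]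
    nlinarith [ih, h3, Nat.cast_nonneg (α := ℝ) n]

end InvEst1D

open InvEst1D in
/-- One-dimensional classical inverse estimate: there is a constant `C > 0` such that for every
`n ≥ 1` and every polynomial `v` of degree at most `n`,
`∫_{-1}^{1} (v'(x))² dx ≤ C n⁴ ∫_{-1}^{1} v(x)² dx`. -/
theorem inverse_estimate_derivative_1d :
    ∃ C : ℝ, 0 < C ∧ ∀ n : ℕ, 1 ≤ n → ∀ v : Polynomial ℝ, v.degree ≤ (n : ℕ) →
      ∫ x in (-1 : ℝ)..1, ((Polynomial.derivative v).eval x) ^ 2 ≤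
        C * (n : ℝ) ^ 4 * ∫ x in (-1 : ℝ)..1, (v.eval x) ^ 2 := by
  refine ⟨3, by norm_num, ?_⟩
  intro n _hn v hdeg
  have hnd : v.natDegree ≤ n := natDegree_le_iff_degree_le.mpr hdeg
  obtain ⟨a, ha⟩ := expand n v hnd
  have hDnn : ∀ k : ℕ, 0 ≤ Iint (derivative (qp k) * derivative (qp k)) :=
    fun k => Iint_sq_nonneg _
  have hNpos : ∀ k : ℕ, 0 < Iint (qp k * qp k) := fun k => Nq_pos k
  have hL : (∫ x in (-1:ℝ)..1, ((derivative v).eval x) ^ 2)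
      = Iint (derivative v * derivative v) := by
    simp only [Iint, eval_mul, pow_two]
  have hR : (∫ x in (-1:ℝ)..1, (v.eval x) ^ 2) = Iint (v * v) := by
    simp only [Iint, eval_mul, pow_two]
  rw [hL, hR]
  have hdv : derivative v = ∑ k ∈ Finset.range (n + 1), C (a k) * derivative (qp k) := by
    rw [ha, map_sum]
    exact Finset.sum_congr rfl fun k _ => derivative_C_mul _ _
  have h1 : Iint (derivative v * derivative v)
      = ∑ j ∈ Finset.range (n + 1), ∑ k ∈ Finset.range (n + 1),
          a j * a k * Iint (derivative (qp j) * derivative (qp k)) := by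
    rw [hdv]; exact Iint_mul_sum _ a a _ _
  have h2 : Iint (derivative v * derivative v)
      ≤ ∑ j ∈ Finset.range (n + 1), ∑ k ∈ Finset.range (n + 1),
          (|a j| * Real.sqrt (Iint (derivative (qp j) * derivative (qp j)))) *
          (|a k| * Real.sqrt (Iint (derivative (qp k) * derivative (qp k)))) := by
    rw [h1]
    refine Finset.sum_le_sum fun j _ => Finset.sum_le_sum fun k _ => ?_
    calc a j * a k * Iint (derivative (qp j) * derivative (qp k))
        ≤ |a j * a k * Iint (derivative (qp j) * derivative (qp k))| := le_abs_self _
      _ = |a j| * |a k| * |Iint (derivative (qp j) * derivative (qp k))| := by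
          rw [abs_mul, abs_mul]
      _ ≤ |a j| * |a k| * (Real.sqrt (Iint (derivative (qp j) * derivative (qp j))) *
            Real.sqrt (Iint (derivative (qp k) * derivative (qp k)))) :=
          mul_le_mul_of_nonneg_left (Iint_CS _ _) (by positivity)
      _ = _ := by ring
  have h3 : ∑ j ∈ Finset.range (n + 1), ∑ k ∈ Finset.range (n + 1),
          (|a j| * Real.sqrt (Iint (derivative (qp j) * derivative (qp j)))) *
          (|a k| * Real.sqrt (Iint (derivative (qp k) * derivative (qp k))))
      = (∑ k ∈ Finset.range (n + 1),
          |a k| * Real.sqrt (Iint (derivative (qp k) * derivative (qp k)))) ^ 2 := by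
    rw [pow_two, Finset.sum_mul_sum]
  have h4 : (∑ k ∈ Finset.range (n + 1),
        |a k| * Real.sqrt (Iint (derivative (qp k) * derivative (qp k)))) ^ 2
      ≤ (∑ k ∈ Finset.range (n + 1), (|a k| * Real.sqrt (Iint (qp k * qp k))) ^ 2) *
        (∑ k ∈ Finset.range (n + 1),
          (Real.sqrt (Iint (derivative (qp k) * derivative (qp k))) /
            Real.sqrt (Iint (qp k * qp k))) ^ 2) := by
    have hcs := Finset.sum_mul_sq_le_sq_mul_sq (Finset.range (n + 1))
      (fun k => |a k| * Real.sqrt (Iint (qp k * qp k)))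
      (fun k => Real.sqrt (Iint (derivative (qp k) * derivative (qp k))) /
        Real.sqrt (Iint (qp k * qp k)))
    have heq : ∀ k ∈ Finset.range (n + 1),
        (|a k| * Real.sqrt (Iint (qp k * qp k))) *
          (Real.sqrt (Iint (derivative (qp k) * derivative (qp k))) /
            Real.sqrt (Iint (qp k * qp k)))
        = |a k| * Real.sqrt (Iint (derivative (qp k) * derivative (qp k))) := by
      intro k _
      have hne : Real.sqrt (Iint (qp k * qp k)) ≠ 0 :=
        (Real.sqrt_pos.mpr (hNpos k)).ne'
      field_simp
    rw [Finset.sum_congr rfl heq] at hcs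
    exact hcs
  have h5 : ∑ k ∈ Finset.range (n + 1), (|a k| * Real.sqrt (Iint (qp k * qp k))) ^ 2
      = Iint (v * v) := by
    have hvv : Iint (v * v) = ∑ j ∈ Finset.range (n + 1), ∑ k ∈ Finset.range (n + 1),
        a j * a k * Iint (qp j * qp k) := by
      conv_lhs => rw [ha]
      exact Iint_mul_sum _ a a _ _
    rw [hvv, Finset.sum_congr rfl (fun j hj => Finset.sum_eq_single_of_mem j hj
      (fun k _ hk => by rw [orth' (Ne.symm hk), mul_zero]))]
    apply Finset.sum_congr rfl
    intro k _
    rw [mul_pow, sq_abs, Real.sq_sqrt (hNpos k).le, pow_two]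
  have h6 : ∑ k ∈ Finset.range (n + 1),
      (Real.sqrt (Iint (derivative (qp k) * derivative (qp k))) /
        Real.sqrt (Iint (qp k * qp k))) ^ 2 ≤ 3 * (n : ℝ) ^ 4 := by
    have hterm : ∀ k ∈ Finset.range (n + 1),
        (Real.sqrt (Iint (derivative (qp k) * derivative (qp k))) /
          Real.sqrt (Iint (qp k * qp k))) ^ 2 ≤ 3 * (k : ℝ) ^ 3 := by
      intro k _
      rw [div_pow, Real.sq_sqrt (hDnn k), Real.sq_sqrt (hNpos k).le,
        div_le_iff₀ (hNpos k)]
      exact Dq_le k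
    calc ∑ k ∈ Finset.range (n + 1),
        (Real.sqrt (Iint (derivative (qp k) * derivative (qp k))) /
          Real.sqrt (Iint (qp k * qp k))) ^ 2
        ≤ ∑ k ∈ Finset.range (n + 1), 3 * (k : ℝ) ^ 3 := Finset.sum_le_sum hterm
      _ = 3 * ∑ k ∈ Finset.range (n + 1), (k : ℝ) ^ 3 := by rw [Finset.mul_sum]
      _ ≤ 3 * (n : ℝ) ^ 4 := by have := sum_cubes_le n; linarith
  have hxnn : 0 ≤ ∑ k ∈ Finset.range (n + 1),
      (|a k| * Real.sqrt (Iint (qp k * qp k))) ^ 2 :=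
    Finset.sum_nonneg fun k _ => sq_nonneg _
  calc Iint (derivative v * derivative v)
      ≤ (∑ k ∈ Finset.range (n + 1),
          |a k| * Real.sqrt (Iint (derivative (qp k) * derivative (qp k)))) ^ 2 := by
        rw [← h3]; exact h2
    _ ≤ (∑ k ∈ Finset.range (n + 1), (|a k| * Real.sqrt (Iint (qp k * qp k))) ^ 2) *
        (∑ k ∈ Finset.range (n + 1),
          (Real.sqrt (Iint (derivative (qp k) * derivative (qp k))) /
            Real.sqrt (Iint (qp k * qp k))) ^ 2) := h4
    _ ≤ (∑ k ∈ Finset.range (n + 1), (|a k| * Real.sqrt (Iint (qp k * qp k))) ^ 2) *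
        (3 * (n : ℝ) ^ 4) := mul_le_mul_of_nonneg_left h6 hxnn
    _ = Iint (v * v) * (3 * (n : ℝ) ^ 4) := by rw [h5]
    _ = 3 * (n : ℝ) ^ 4 * Iint (v * v) := by ring
end

section
/- Positivity of the Roe-averaged squared sound speed: let γ > 1 and let U⁺ = (ρ⁺, m₁⁺, m₂⁺, E⁺) and U⁻ = (ρ⁻, m₁⁻, m₂⁻, E⁻) be two states with ρ^± > 0 and pressures p^± = (γ−1)(E^± − ((m₁^±)² + (m₂^±)²)/(2ρ^±)) > 0. Define w^± = √(ρ^±), the Roe-averaged velocities ṽᵢ = (w⁺ vᵢ⁺ + w⁻ vᵢ⁻)/(w⁺ + w⁻) (where vᵢ^± = mᵢ^±/ρ^±), the specific total enthalpies H^± = (E^± + p^±)/ρ^±, and the Roe-averaged enthalpy H̃ = (w⁺ H⁺ + w⁻ H⁻)/(w⁺ + w⁻). Then the Roe-averaged squared sound speed is strictly positive: c̃² := (γ−1)(H̃ − ½(ṽ₁² + ṽ₂²)) > 0. -/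
lemma roe_key (wp wm Hp Hm a1 a2 b1 b2 : ℝ) (hwp : 0 < wp) (hwm : 0 < wm)
    (hp : 0 < Hp - (1/2) * (a1^2 + a2^2)) (hm : 0 < Hm - (1/2) * (b1^2 + b2^2)) :
    0 < (wp*Hp + wm*Hm)/(wp+wm) -
      (1/2) * (((wp*a1+wm*b1)/(wp+wm))^2 + ((wp*a2+wm*b2)/(wp+wm))^2) := by
  have hs : 0 < wp + wm := by linarith
  have heq : (wp*Hp + wm*Hm)/(wp+wm) -
      (1/2) * (((wp*a1+wm*b1)/(wp+wm))^2 + ((wp*a2+wm*b2)/(wp+wm))^2)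
      = (wp^2*(Hp - (1/2)*(a1^2+a2^2)) + wm^2*(Hm - (1/2)*(b1^2+b2^2))
        + wp*wm*((Hp - (1/2)*(a1^2+a2^2)) + (Hm - (1/2)*(b1^2+b2^2))
          + (1/2)*((a1-b1)^2 + (a2-b2)^2))) / (wp+wm)^2 := by
    field_simp
    ring
  rw [heq]
  apply div_pos
  · have h1 : 0 < wp^2 := by positivity
    have h2 : 0 < wm^2 := by positivity
    have h3 : 0 < wp*wm := mul_pos hwp hwm
    nlinarith [sq_nonneg (a1-b1), sq_nonneg (a2-b2)]
  · positivity

/-- Positivity of the Roe-averaged squared sound speed: for `γ > 1` and two admissible states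
(`ρ⁺, ρ⁻ > 0`, `p⁺, p⁻ > 0`), the Roe-averaged squared sound speed
`c̃² = (γ−1)(H̃ − ½(ṽ₁² + ṽ₂²))` is strictly positive, where `ṽ` and `H̃` are the Roe averages
(weighted by `√ρ±`) of the velocities and specific total enthalpies. -/
theorem roe_averaged_sound_speed_pos (γ : ℝ) (hγ : 1 < γ)
    (ρp mp₁ mp₂ Ep ρm mm₁ mm₂ Em : ℝ) (hρp : 0 < ρp) (hρm : 0 < ρm)
    (hpp : 0 < (γ - 1) * (Ep - (mp₁ ^ 2 + mp₂ ^ 2) / (2 * ρp)))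
    (hpm : 0 < (γ - 1) * (Em - (mm₁ ^ 2 + mm₂ ^ 2) / (2 * ρm))) :
    let wp := Real.sqrt ρp
    let wm := Real.sqrt ρm
    let v₁t := (wp * (mp₁ / ρp) + wm * (mm₁ / ρm)) / (wp + wm)
    let v₂t := (wp * (mp₂ / ρp) + wm * (mm₂ / ρm)) / (wp + wm)
    let Hp := (Ep + (γ - 1) * (Ep - (mp₁ ^ 2 + mp₂ ^ 2) / (2 * ρp))) / ρp
    let Hm := (Em + (γ - 1) * (Em - (mm₁ ^ 2 + mm₂ ^ 2) / (2 * ρm))) / ρm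
    let Ht := (wp * Hp + wm * Hm) / (wp + wm)
    0 < (γ - 1) * (Ht - (1 / 2) * (v₁t ^ 2 + v₂t ^ 2)) := by
  intro wp wm v₁t v₂t Hp Hm Ht
  have hγ1 : 0 < γ - 1 := by linarith
  have hXp : 0 < Ep - (mp₁ ^ 2 + mp₂ ^ 2) / (2 * ρp) := by nlinarith
  have hXm : 0 < Em - (mm₁ ^ 2 + mm₂ ^ 2) / (2 * ρm) := by nlinarith
  have hwp : 0 < wp := Real.sqrt_pos.mpr hρp
  have hwm : 0 < wm := Real.sqrt_pos.mpr hρm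
  have hγ0 : 0 < γ := by linarith
  have hHp : 0 < Hp - (1/2) * ((mp₁/ρp)^2 + (mp₂/ρp)^2) := by
    have heq : Hp - (1/2) * ((mp₁/ρp)^2 + (mp₂/ρp)^2)
        = γ * (Ep - (mp₁ ^ 2 + mp₂ ^ 2) / (2 * ρp)) / ρp := by
      show (Ep + (γ - 1) * (Ep - (mp₁ ^ 2 + mp₂ ^ 2) / (2 * ρp))) / ρp
          - (1/2) * ((mp₁/ρp)^2 + (mp₂/ρp)^2) = _
      field_simp
      ring
    rw [heq]
    positivity
  have hHm : 0 < Hm - (1/2) * ((mm₁/ρm)^2 + (mm₂/ρm)^2) := by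
    have heq : Hm - (1/2) * ((mm₁/ρm)^2 + (mm₂/ρm)^2)
        = γ * (Em - (mm₁ ^ 2 + mm₂ ^ 2) / (2 * ρm)) / ρm := by
      show (Em + (γ - 1) * (Em - (mm₁ ^ 2 + mm₂ ^ 2) / (2 * ρm))) / ρm
          - (1/2) * ((mm₁/ρm)^2 + (mm₂/ρm)^2) = _
      field_simp
      ring
    rw [heq]
    positivity
  exact mul_pos hγ1
    (roe_key wp wm Hp Hm (mp₁/ρp) (mp₂/ρp) (mm₁/ρm) (mm₂/ρm) hwp hwm hHp hHm)
end
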